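/- Under the stated hypotheses, with W = rmi(L_ω, A_ω)_{ω∈Ω} and C = rcm(L_ω, A_ω)_{ω∈Ω}: the closure of dom W equals the closure of the set { ∫_Ω L_ω* x*(ω) μ(dω) : x* : Ω → H measurable with ∫_Ω ‖x*(ω)‖² μ(dω) < +∞ and x*(ω) ∈ dom A_ω for μ-a.e. ω }, and the closure of ran C equals the closure of the set { ∫_Ω L_ω* x*(ω) μ(dω) : x* : Ω → H measurable with ∫_Ω ‖x*(ω)‖² μ(dω) < +∞ and x*(ω) ∈ ran A_ω for μ-a.e. ω }. -/

import Mathlib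

open MeasureTheory
open scoped ENNReal NNReal

/-- A set-valued operator `A : H → Set H` (identified with its graph) is monotone if
`⟪x − y, u − v⟫ ≥ 0` whenever `u ∈ A x` and `v ∈ A y`. -/
def IsMonotoneOp {H : Type*} [NormedAddCommGroup H] [InnerProductSpace ℝ H]
    (A : H → Set H) : Prop :=
  ∀ ⦃x u y v : H⦄, u ∈ A x → v ∈ A y → (0 : ℝ) ≤ inner ℝ (x - y) (u - v)

/-- `A` is maximally monotone: it is monotone and its graph is not properly contained in the
graph of any monotone operator. -/
def IsMaxMonotone {H : Type*} [NormedAddCommGroup H] [InnerProductSpace ℝ H]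
    (A : H → Set H) : Prop :=
  IsMonotoneOp A ∧ ∀ B : H → Set H, IsMonotoneOp B → (∀ x, A x ⊆ B x) → ∀ x, B x ⊆ A x

/-- The inverse operator `A⁻¹`, whose graph is `{(u, x) : (x, u) ∈ gra A}`. -/
def graphInv {H : Type*} (A : H → Set H) : H → Set H := fun u => {x | u ∈ A x}

/-- `J` is the resolvent `(Id + A)⁻¹` of `A` (as a single-valued, everywhere-defined map):
`J x = y ↔ x − y ∈ A y`. -/
def IsResolventOf {H : Type*} [AddCommGroup H] (A : H → Set H) (J : H → H) : Prop :=
  ∀ x y, J x = y ↔ x - y ∈ A y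

/-- For a single-valued map `R : X → X`, `rmiOp R = R⁻¹ − Id` as a set-valued operator:
`u ∈ (R⁻¹ − Id)(x) ↔ R (x + u) = x`. -/
def rmiOp {X : Type*} [AddCommGroup X] (R : X → X) : X → Set X :=
  fun x => {u | R (x + u) = x}

/-!
Put `T ζ = ∫ L_ω* J_{A_ω}(L_ω ζ) dμ`, so that `W = T⁻¹ - Id` and `dom W = ran T`. Since
`∫ ‖L_ω‖² ≤ 1` and every `J_{A_ω}` is firmly nonexpansive, so is `T`, i.e. `T = J_W`.

`ran T` lies in the right-hand set (take `x* = J_{A_ω}(L_ω ζ)`). Conversely, let `x = ∫ L_ω* q(ω)`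
where `q` has a square-integrable selection `u(ω) ∈ A_ω q(ω)`. Monotonicity of the `A_ω` bounds
`⟪T z - x, z - x⟫` from below by `-∫ ‖q + u - L x‖² / 4`, uniformly in `z`, and this forces the
resolvents `J_{W/n} x ∈ ran T` to converge to `x`. An arbitrary `x*` with values in `dom A_ω`
is the pointwise limit of `J_{A_ω/(n+1)} x*(ω)`, which carry the selections
`(n+1) (x* - J_{A_ω/(n+1)} x*)`; the graph point `(x₀, x₀*)` of the hypothesis bounds them
by a square-integrable function independent of `n`, so dominated convergence applies.

The resolvents of `W/n` and `A_ω/(n+1)` come from `J_W = T` and `J_{A_ω}` by solving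
`z + s J z = b` for `z`, a contraction problem (Zarantonello) whose iterates stay measurable
in `ω`. The claim about `C` is the same one for `A_ω⁻¹`, whose resolvent is `Id - J_{A_ω}`,
because `ran C = dom rmi(L_ω, A_ω⁻¹)`.
-/

open Filter Topology

section Resolvent

variable {E : Type*} [AddCommGroup E] {A : E → Set E} {J : E → E}

theorem IsResolventOf.sub_mem (hJ : IsResolventOf A J) (x : E) : x - J x ∈ A (J x) :=
  (hJ x (J x)).1 rfl

theorem IsResolventOf.apply_eq_sub {J' : E → E} (hJ : IsResolventOf A J)
    (hJ' : IsResolventOf (graphInv A) J') (z : E) : J' z = z - J z := by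
  have h : J' z ∈ A (z - J' z) := hJ'.sub_mem z
  rw [(hJ z _).2 (by rwa [sub_sub_cancel]), sub_sub_cancel]

theorem setOf_rmiOp_nonempty (R : E → E) : {ξ | (rmiOp R ξ).Nonempty} = Set.range R := by
  ext ξ
  constructor
  · rintro ⟨u, hu⟩
    exact ⟨ξ + u, hu⟩
  · rintro ⟨ζ, rfl⟩
    exact ⟨ζ - R ζ, by simp [rmiOp]⟩

theorem setOf_exists_mem_graphInv_rmiOp (R : E → E) :
    {η | ∃ ξ, η ∈ graphInv (rmiOp R) ξ} = Set.range R :=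
  setOf_rmiOp_nonempty R

end Resolvent

section MonotoneOperator

variable {E : Type*} [NormedAddCommGroup E] [InnerProductSpace ℝ E] {A : E → Set E}

def FirmlyNonexpansive (T : E → E) : Prop :=
  ∀ a b, ‖T a - T b‖ ^ 2 ≤ inner ℝ (T a - T b) (a - b)

theorem FirmlyNonexpansive.inner_nonneg {T : E → E} (hT : FirmlyNonexpansive T) (a b : E) :
    0 ≤ inner ℝ (T a - T b) (a - b) :=
  (sq_nonneg _).trans (hT a b)

theorem FirmlyNonexpansive.norm_sub_le {T : E → E} (hT : FirmlyNonexpansive T) (a b : E) :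
    ‖T a - T b‖ ≤ ‖a - b‖ := by
  have h := (hT a b).trans (real_inner_le_norm _ _)
  nlinarith [norm_nonneg (T a - T b), norm_nonneg (a - b)]

theorem IsMonotoneOp.graphInv (hA : IsMonotoneOp A) : IsMonotoneOp (graphInv A) :=
  fun _ _ _ _ hu hv => by rw [real_inner_comm]; exact hA hu hv

/-- `c • (p - y) ∈ A y` says that `y = J_{c⁻¹ A} p`. -/
theorem IsMonotoneOp.norm_sq_le_inner (hA : IsMonotoneOp A) {c : ℝ} (hc : 0 < c)
    {p₁ p₂ y₁ y₂ : E} (h₁ : c • (p₁ - y₁) ∈ A y₁) (h₂ : c • (p₂ - y₂) ∈ A y₂) :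
    ‖y₁ - y₂‖ ^ 2 ≤ inner ℝ (y₁ - y₂) (p₁ - p₂) := by
  have h := hA h₁ h₂
  rw [← smul_sub, inner_smul_right, show p₁ - y₁ - (p₂ - y₂) = (p₁ - p₂) - (y₁ - y₂) by abel,
    inner_sub_right, real_inner_self_eq_norm_sq] at h
  nlinarith

theorem IsResolventOf.firmlyNonexpansive {J : E → E} (hA : IsMonotoneOp A)
    (hJ : IsResolventOf A J) : FirmlyNonexpansive J := fun a b =>
  hA.norm_sq_le_inner one_pos (by simpa using hJ.sub_mem a) (by simpa using hJ.sub_mem b)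

theorem IsMonotoneOp.mul_norm_sub_le (hA : IsMonotoneOp A) {c : ℝ} {p y a : E}
    (h : c • (p - y) ∈ A y) (ha : a ∈ A p) : c * ‖p - y‖ ≤ ‖a‖ := by
  have h₁ := hA h ha
  rw [← neg_sub p y, inner_neg_left, inner_sub_right, inner_smul_right,
    real_inner_self_eq_norm_sq] at h₁
  have h₂ := real_inner_le_norm (p - y) a
  rcases (norm_nonneg (p - y)).eq_or_lt with h₀ | h₀
  · rw [← h₀, mul_zero]; exact norm_nonneg a
  · nlinarith

theorem IsMonotoneOp.norm_le_of_smul_sub_mem (hA : IsMonotoneOp A) {x s : E} (hs : s ∈ A x)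
    {c : ℝ} (hc : 1 ≤ c) {p y : E} (h : c • (p - y) ∈ A y) :
    ‖y‖ ≤ ‖p‖ + (2 * ‖x‖ + ‖s‖) := by
  have hc₀ : 0 < c := one_pos.trans_le hc
  have hx : c • ((x + c⁻¹ • s) - x) ∈ A x := by
    rwa [add_sub_cancel_left, smul_smul, mul_inv_cancel₀ hc₀.ne', one_smul]
  have hyx : ‖y - x‖ ≤ ‖p - (x + c⁻¹ • s)‖ := by
    have h₁ := (hA.norm_sq_le_inner hc₀ h hx).trans (real_inner_le_norm _ _)
    nlinarith [norm_nonneg (y - x), norm_nonneg (p - (x + c⁻¹ • s))]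
  have hcs : ‖c⁻¹ • s‖ ≤ ‖s‖ := by
    rw [norm_smul, norm_inv, Real.norm_of_nonneg hc₀.le]
    exact mul_le_of_le_one_left (norm_nonneg s) (inv_le_one_of_one_le₀ hc)
  calc ‖y‖ ≤ ‖y - x‖ + ‖x‖ := norm_le_norm_sub_add y x
    _ ≤ ‖p‖ + (‖x‖ + ‖c⁻¹ • s‖) + ‖x‖ := by
        gcongr; exact hyx.trans ((norm_sub_le _ _).trans (by gcongr; exact norm_add_le _ _))
    _ ≤ ‖p‖ + (2 * ‖x‖ + ‖s‖) := by linarith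

theorem IsMonotoneOp.neg_norm_sq_div_four_le_inner (hA : IsMonotoneOp A) {y a q u : E}
    (ha : a ∈ A y) (hu : u ∈ A q) (c : E) :
    -‖q + u - c‖ ^ 2 / 4 ≤ inner ℝ (y - q) (y + a - c) := by
  have h := hA ha hu
  rw [show y + a - c = (a - u) + ((y - q) + (q + u - c)) by abel, inner_add_right,
    inner_add_right, real_inner_self_eq_norm_sq]
  have := neg_le_of_abs_le (abs_real_inner_le_norm (y - q) (q + u - c))
  nlinarith [sq_nonneg (2 * ‖y - q‖ - ‖q + u - c‖)]

end MonotoneOperator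

section Zarantonello

variable {E : Type*} [NormedAddCommGroup E] [InnerProductSpace ℝ E] {T : E → E} {s : ℝ}

/-- Its fixed points solve `z + s • T z = b`; for monotone nonexpansive `T` the map
`z ↦ z + s • T z` is strongly monotone and `(1 + s)`-Lipschitz, whence the contraction. -/
noncomputable def addSmulStep (T : E → E) (s : ℝ) (b z : E) : E :=
  z - ((1 + s) ^ 2)⁻¹ • (z + s • T z - b)

theorem contractingWith_addSmulStep (hT : FirmlyNonexpansive T) (hs : 0 ≤ s) (b : E) :
    ContractingWith (1 - ((1 + s) ^ 2)⁻¹ / 2).toNNReal (addSmulStep T s b) := by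
  set l := ((1 + s) ^ 2)⁻¹
  have hl₀ : 0 < l := by positivity
  have hl₁ : l ≤ 1 := inv_le_one_of_one_le₀ (one_le_pow₀ (by linarith))
  have hK : 0 ≤ 1 - l / 2 := by linarith
  refine ⟨by rw [Real.toNNReal_lt_one]; linarith, LipschitzWith.of_dist_le_mul fun x y => ?_⟩
  rw [Real.coe_toNNReal _ hK, dist_eq_norm, dist_eq_norm]
  set d := x - y
  set F := d + s • (T x - T y)
  have hstep : addSmulStep T s b x - addSmulStep T s b y = d - l • F := by
    simp only [addSmulStep, d, F, smul_sub, smul_add]; abel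
  have hF : ‖F‖ ≤ (1 + s) * ‖d‖ := by
    calc ‖F‖ ≤ ‖d‖ + s * ‖T x - T y‖ := by
          simpa [norm_smul, abs_of_nonneg hs] using norm_add_le d (s • (T x - T y))
      _ ≤ (1 + s) * ‖d‖ := by nlinarith [hT.norm_sub_le x y]
  have hdF : ‖d‖ ^ 2 ≤ inner ℝ d F := by
    rw [inner_add_right, inner_smul_right, real_inner_self_eq_norm_sq, real_inner_comm]
    nlinarith [hT.inner_nonneg x y]
  have hlF : (l * ‖F‖) ^ 2 ≤ l * ‖d‖ ^ 2 := by
    have hl : l * (1 + s) ^ 2 = 1 := inv_mul_cancel₀ (by positivity)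
    calc (l * ‖F‖) ^ 2 ≤ l ^ 2 * ((1 + s) * ‖d‖) ^ 2 := by rw [mul_pow]; gcongr
      _ = l * ‖d‖ ^ 2 := by rw [mul_pow, ← mul_assoc, sq l, mul_assoc l l, hl]; ring
  have hsq : ‖d - l • F‖ ^ 2 ≤ ((1 - l / 2) * ‖d‖) ^ 2 := by
    rw [norm_sub_sq_real, inner_smul_right, norm_smul, Real.norm_of_nonneg hl₀.le]
    nlinarith [sq_nonneg (l * ‖d‖)]
  rw [hstep]
  exact (pow_le_pow_iff_left₀ (norm_nonneg _) (by positivity) two_ne_zero).1 hsq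

noncomputable def invAddSmul (T : E → E) (s : ℝ) (b : E) : E :=
  limUnder atTop fun k => (addSmulStep T s b)^[k] b

variable [CompleteSpace E]

theorem tendsto_iterate_addSmulStep (hT : FirmlyNonexpansive T) (hs : 0 ≤ s) (b : E) :
    Tendsto (fun k => (addSmulStep T s b)^[k] b) atTop (𝓝 (invAddSmul T s b)) := by
  have hc := contractingWith_addSmulStep hT hs b
  rw [invAddSmul, (hc.tendsto_iterate_fixedPoint b).limUnder_eq]
  exact hc.tendsto_iterate_fixedPoint b

theorem invAddSmul_add_smul (hT : FirmlyNonexpansive T) (hs : 0 ≤ s) (b : E) :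
    invAddSmul T s b + s • T (invAddSmul T s b) = b := by
  have hc := contractingWith_addSmulStep hT hs b
  have hfix : addSmulStep T s b (invAddSmul T s b) = invAddSmul T s b := by
    rw [invAddSmul, (hc.tendsto_iterate_fixedPoint b).limUnder_eq]
    exact hc.fixedPoint_isFixedPt
  rw [addSmulStep, sub_eq_self, smul_eq_zero, sub_eq_zero] at hfix
  exact hfix.resolve_left (by positivity)

/-- With `T = J_W`, the point `T z ∈ range T` where `z + n • T z = (n + 1) • x` is `J_{W/n} x`,
and `h z` reads `n ‖T z - x‖² ≤ C`. -/
theorem mem_closure_range_of_forall_le_inner (hT : FirmlyNonexpansive T) {x : E} {C : ℝ}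
    (h : ∀ z, -C ≤ inner ℝ (T z - x) (z - x)) : x ∈ closure (Set.range T) := by
  rw [Metric.mem_closure_iff]
  intro ε hε
  obtain ⟨n, hn⟩ := exists_nat_gt (C / ε ^ 2)
  set z := invAddSmul T n ((n + 1 : ℝ) • x)
  have hz : z - x = (n : ℝ) • (x - T z) := by
    have hz₀ : z + (n : ℝ) • T z = (n + 1 : ℝ) • x := invAddSmul_add_smul hT n.cast_nonneg _
    calc z - x = (z + (n : ℝ) • T z) - x - (n : ℝ) • T z := by abel
      _ = (n : ℝ) • (x - T z) := by rw [hz₀, add_smul, one_smul, smul_sub]; abel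
  refine ⟨T z, ⟨z, rfl⟩, ?_⟩
  have hCz := h z
  rw [hz, inner_smul_right, ← neg_sub (T z) x, inner_neg_right, real_inner_self_eq_norm_sq] at hCz
  rw [div_lt_iff₀ (by positivity)] at hn
  rw [dist_eq_norm, ← norm_neg, neg_sub]
  by_contra! hge
  nlinarith [mul_le_mul_of_nonneg_left (pow_le_pow_left₀ hε.le hge 2) n.cast_nonneg]

/-- For `J = J_A` this is `J_{c⁻¹ A}`. -/
noncomputable def scaledResolvent (J : E → E) (c : ℝ) (p : E) : E :=
  J (invAddSmul J (c - 1) (c • p))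

theorem IsResolventOf.smul_sub_scaledResolvent_mem {A : E → Set E} {J : E → E}
    (hA : IsMonotoneOp A) (hJ : IsResolventOf A J) {c : ℝ} (hc : 1 ≤ c) (p : E) :
    c • (p - scaledResolvent J c p) ∈ A (scaledResolvent J c p) := by
  set z := invAddSmul J (c - 1) (c • p)
  have hz : z + (c - 1) • J z = c • p :=
    invAddSmul_add_smul (hJ.firmlyNonexpansive hA) (by linarith) _
  have hpz : c • (p - J z) = z - J z := by
    rw [smul_sub, ← hz, sub_smul, one_smul]; abel
  rw [scaledResolvent, hpz]
  exact hJ.sub_mem z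

theorem IsResolventOf.tendsto_scaledResolvent {A : E → Set E} {J : E → E} (hA : IsMonotoneOp A)
    (hJ : IsResolventOf A J) {p : E} (hp : (A p).Nonempty) :
    Tendsto (fun n : ℕ => scaledResolvent J (n + 1) p) atTop (𝓝 p) := by
  obtain ⟨a, ha⟩ := hp
  rw [tendsto_iff_norm_sub_tendsto_zero]
  refine squeeze_zero (fun n => norm_nonneg _) (fun n => ?_)
    (by simpa using tendsto_one_div_add_atTop_nhds_zero_nat.mul_const ‖a‖)
  have h := hA.mul_norm_sub_le (hJ.smul_sub_scaledResolvent_mem hA (c := n + 1) (by simp) p) ha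
  rw [norm_sub_rev, inv_mul_eq_div, le_div_iff₀ (by positivity), mul_comm]
  exact h

end Zarantonello

section Measurability

variable {Ω : Type*} [MeasurableSpace Ω]
  {E : Type*} [NormedAddCommGroup E] [InnerProductSpace ℝ E] [CompleteSpace E]
  [SecondCountableTopology E] [MeasurableSpace E] [BorelSpace E]

theorem measurable_of_forall_inner {f : Ω → E}
    (h : ∀ c : E, Measurable fun ω => inner ℝ (f ω) c) : Measurable f := by
  have : Nonempty E := ⟨0⟩
  set d := TopologicalSpace.denseSeq E
  set ι : E → ℕ → ℝ := fun y n => inner ℝ y (d n)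
  have hι : Continuous ι := continuous_pi fun n => continuous_id.inner continuous_const
  have hinj : Function.Injective ι := fun y y' hyy =>
    ext_inner_right ℝ fun c => (TopologicalSpace.denseRange_denseSeq E).induction_on c
      (isClosed_eq (continuous_const.inner continuous_id) (continuous_const.inner continuous_id))
      fun n => congrFun hyy n
  exact (hι.measurableEmbedding hinj).measurable_comp_iff.1
    (measurable_pi_lambda _ fun n => h (d n))

theorem measurable_invAddSmul {T : Ω → E → E} (hT : ∀ ω, FirmlyNonexpansive (T ω))
    (hTm : ∀ v : Ω → E, Measurable v → Measurable fun ω => T ω (v ω)) {s : ℝ} (hs : 0 ≤ s)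
    {b : Ω → E} (hb : Measurable b) : Measurable fun ω => invAddSmul (T ω) s (b ω) := by
  have hiter (k : ℕ) : Measurable fun ω => (addSmulStep (T ω) s (b ω))^[k] (b ω) := by
    induction k with
    | zero => exact hb
    | succ k ih =>
      simp only [Function.iterate_succ_apply', addSmulStep]
      exact ih.sub (((ih.add ((hTm _ ih).const_smul s)).sub hb).const_smul _)
  exact measurable_of_tendsto_metrizable' atTop hiter
    (tendsto_pi_nhds.2 fun ω => tendsto_iterate_addSmulStep (hT ω) hs (b ω))

end Measurability

section SquareIntegrable

variable {Ω : Type*} [MeasurableSpace Ω] {μ : Measure Ω}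

theorem MeasureTheory.MemLp.integrable_inner {H : Type*} [NormedAddCommGroup H]
    [InnerProductSpace ℝ H] {f g : Ω → H} (hf : MemLp f 2 μ) (hg : MemLp g 2 μ) :
    Integrable (fun ω => inner ℝ (f ω) (g ω)) μ :=
  (hf.norm.integrable_mul hg.norm).mono' (hf.1.inner hg.1)
    (ae_of_all _ fun ω => norm_inner_le_norm (f ω) (g ω))

theorem memLp_two_of_integrable_sq {g : Ω → ℝ} (hg : ∀ ω, 0 ≤ g ω)
    (h : Integrable (fun ω => g ω ^ 2) μ) : MemLp g 2 μ := by
  have hsqrt : (fun ω => √(g ω ^ 2)) = g := funext fun ω => Real.sqrt_sq (hg ω)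
  have hm : AEStronglyMeasurable g μ := hsqrt ▸ h.aemeasurable.sqrt.aestronglyMeasurable
  exact (memLp_two_iff_integrable_sq hm).2 h

theorem memLp_two_iff_lintegral_nnnorm_sq_lt_top {E : Type*} [NormedAddCommGroup E]
    {f : Ω → E} (hf : AEStronglyMeasurable f μ) :
    MemLp f 2 μ ↔ (∫⁻ ω, (‖f ω‖₊ : ℝ≥0∞) ^ 2 ∂μ) < ⊤ := by
  rw [MemLp, eLpNorm_lt_top_iff_lintegral_rpow_enorm_lt_top two_ne_zero ENNReal.ofNat_ne_top]
  simp [hf, enorm]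

end SquareIntegrable

section IntegralResolventMixture

variable {Ω : Type*} [MeasurableSpace Ω] {μ : Measure Ω}
  {X : Type*} [NormedAddCommGroup X] [InnerProductSpace ℝ X]
  {H : Type*} [NormedAddCommGroup H] [InnerProductSpace ℝ H]
  [SecondCountableTopology H] [MeasurableSpace H] [BorelSpace H]
  {A : Ω → H → Set H} {J : Ω → H → H} {L : Ω → X →L[ℝ] H}

theorem memLp_apply_of_memLp_norm (hLm : ∀ ξ, Measurable fun ω => L ω ξ)
    (hL : MemLp (fun ω => ‖L ω‖) 2 μ) (ξ : X) : MemLp (fun ω => L ω ξ) 2 μ :=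
  hL.of_le_mul (hLm ξ).aestronglyMeasurable (ae_of_all _ fun ω => by
    rw [norm_norm, mul_comm]; exact (L ω).le_opNorm ξ)

theorem memLp_of_smul_sub_mem (hA : ∀ ω, IsMonotoneOp (A ω)) {x₀ s₀ : Ω → H}
    (hx₀ : MemLp x₀ 2 μ) (hs₀ : MemLp s₀ 2 μ) (h₀ : ∀ᵐ ω ∂μ, s₀ ω ∈ A ω (x₀ ω)) {c : ℝ}
    (hc : 1 ≤ c) {p y : Ω → H} (hp : MemLp p 2 μ) (hy : Measurable y)
    (h : ∀ ω, c • (p ω - y ω) ∈ A ω (y ω)) : MemLp y 2 μ := by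
  refine (hp.norm.add ((hx₀.norm.const_mul 2).add hs₀.norm)).of_le hy.aestronglyMeasurable ?_
  filter_upwards [h₀] with ω hω
  exact ((hA ω).norm_le_of_smul_sub_mem hω hc (h ω)).trans (le_abs_self _)

theorem memLp_resolvent_apply (hA : ∀ ω, IsMonotoneOp (A ω)) (hJ : ∀ ω, IsResolventOf (A ω) (J ω))
    {x₀ s₀ : Ω → H} (hx₀ : MemLp x₀ 2 μ) (hs₀ : MemLp s₀ 2 μ)
    (h₀ : ∀ᵐ ω ∂μ, s₀ ω ∈ A ω (x₀ ω)) (hLm : ∀ ξ, Measurable fun ω => L ω ξ)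
    (hL : MemLp (fun ω => ‖L ω‖) 2 μ) (hJm : ∀ ζ, Measurable fun ω => J ω (L ω ζ)) (ζ : X) :
    MemLp (fun ω => J ω (L ω ζ)) 2 μ :=
  memLp_of_smul_sub_mem hA hx₀ hs₀ h₀ le_rfl (memLp_apply_of_memLp_norm hLm hL ζ) (hJm ζ)
    fun ω => by simpa only [one_smul] using (hJ ω).sub_mem (L ω ζ)

variable [CompleteSpace X] [SecondCountableTopology X] [MeasurableSpace X] [BorelSpace X]
  [CompleteSpace H]

theorem measurable_adjoint_apply (hLm : ∀ ξ, Measurable fun ω => L ω ξ) {v : Ω → H}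
    (hv : Measurable v) : Measurable fun ω => (L ω).adjoint (v ω) :=
  measurable_of_forall_inner fun ξ => by
    simpa only [ContinuousLinearMap.adjoint_inner_left] using hv.inner (hLm ξ)

theorem integrable_adjoint_apply (hLm : ∀ ξ, Measurable fun ω => L ω ξ)
    (hL : MemLp (fun ω => ‖L ω‖) 2 μ) {v : Ω → H} (hvm : Measurable v) (hv : MemLp v 2 μ) :
    Integrable (fun ω => (L ω).adjoint (v ω)) μ :=
  (hL.integrable_mul hv.norm).mono' (measurable_adjoint_apply hLm hvm).aestronglyMeasurable
    (ae_of_all _ fun ω => by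
      simpa only [Pi.mul_apply, LinearIsometryEquiv.norm_map] using
        (L ω).adjoint.le_opNorm (v ω))

theorem inner_integral_adjoint (hLm : ∀ ξ, Measurable fun ω => L ω ξ)
    (hL : MemLp (fun ω => ‖L ω‖) 2 μ) {v : Ω → H} (hvm : Measurable v) (hv : MemLp v 2 μ)
    (ξ : X) : inner ℝ (∫ ω, (L ω).adjoint (v ω) ∂μ) ξ = ∫ ω, inner ℝ (v ω) (L ω ξ) ∂μ := by
  rw [real_inner_comm, ← integral_inner (integrable_adjoint_apply hLm hL hvm hv) ξ]
  congr 1 with ω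
  rw [real_inner_comm, ContinuousLinearMap.adjoint_inner_left]

theorem integral_adjoint_sub (hLm : ∀ ξ, Measurable fun ω => L ω ξ)
    (hL : MemLp (fun ω => ‖L ω‖) 2 μ) {v w : Ω → H} (hvm : Measurable v) (hv : MemLp v 2 μ)
    (hwm : Measurable w) (hw : MemLp w 2 μ) :
    ∫ ω, (L ω).adjoint (v ω - w ω) ∂μ
      = ∫ ω, (L ω).adjoint (v ω) ∂μ - ∫ ω, (L ω).adjoint (w ω) ∂μ := by
  simp only [map_sub]
  exact integral_sub (integrable_adjoint_apply hLm hL hvm hv)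
    (integrable_adjoint_apply hLm hL hwm hw)

theorem norm_integral_adjoint_sq_le (hLm : ∀ ξ, Measurable fun ω => L ω ξ)
    (hL : MemLp (fun ω => ‖L ω‖) 2 μ) (hL1 : ∫ ω, ‖L ω‖ ^ 2 ∂μ ≤ 1) {v : Ω → H}
    (hvm : Measurable v) (hv : MemLp v 2 μ) :
    ‖∫ ω, (L ω).adjoint (v ω) ∂μ‖ ^ 2 ≤ ∫ ω, ‖v ω‖ ^ 2 ∂μ := by
  set x := ∫ ω, (L ω).adjoint (v ω) ∂μ
  have hv2 := (memLp_two_iff_integrable_sq_norm hv.1).1 hv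
  have hL2 := hL.integrable_sq
  have hx : ‖x‖ ^ 2 = ∫ ω, inner ℝ (v ω) (L ω x) ∂μ := by
    rw [← real_inner_self_eq_norm_sq]; exact inner_integral_adjoint hLm hL hvm hv x
  have hle : ∫ ω, inner ℝ (v ω) (L ω x) ∂μ ≤ ∫ ω, (‖v ω‖ ^ 2 + ‖L ω‖ ^ 2 * ‖x‖ ^ 2) / 2 ∂μ := by
    refine integral_mono (hv.integrable_inner (memLp_apply_of_memLp_norm hLm hL x))
      ((hv2.add (hL2.mul_const _)).div_const 2) fun ω => ?_
    have h₁ := real_inner_le_norm (v ω) (L ω x)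
    have h₂ := (L ω).le_opNorm x
    nlinarith [sq_nonneg (‖v ω‖ - ‖L ω‖ * ‖x‖), norm_nonneg (v ω)]
  rw [integral_div, integral_add hv2 (hL2.mul_const _), integral_mul_const] at hle
  nlinarith [mul_le_of_le_one_left (sq_nonneg ‖x‖) hL1]

theorem firmlyNonexpansive_integral_adjoint (hLm : ∀ ξ, Measurable fun ω => L ω ξ)
    (hL : MemLp (fun ω => ‖L ω‖) 2 μ) (hL1 : ∫ ω, ‖L ω‖ ^ 2 ∂μ ≤ 1)
    (hJ : ∀ ω, FirmlyNonexpansive (J ω)) (hJm : ∀ ζ, Measurable fun ω => J ω (L ω ζ))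
    (hJ2 : ∀ ζ, MemLp (fun ω => J ω (L ω ζ)) 2 μ) :
    FirmlyNonexpansive fun ζ => ∫ ω, (L ω).adjoint (J ω (L ω ζ)) ∂μ := by
  intro ζ ζ'
  have hDm : Measurable fun ω => J ω (L ω ζ) - J ω (L ω ζ') := (hJm ζ).sub (hJm ζ')
  have hD : MemLp (fun ω => J ω (L ω ζ) - J ω (L ω ζ')) 2 μ := (hJ2 ζ).sub (hJ2 ζ')
  rw [← integral_adjoint_sub hLm hL (hJm ζ) (hJ2 ζ) (hJm ζ') (hJ2 ζ')]
  refine (norm_integral_adjoint_sq_le hLm hL hL1 hDm hD).trans ?_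
  rw [inner_integral_adjoint hLm hL hDm hD]
  refine integral_mono ((memLp_two_iff_integrable_sq_norm hD.1).1 hD)
    (hD.integrable_inner (memLp_apply_of_memLp_norm hLm hL _)) fun ω => ?_
  simpa only [map_sub] using hJ ω (L ω ζ) (L ω ζ')

section Monotone

variable (hLm : ∀ ξ, Measurable fun ω => L ω ξ) (hL : MemLp (fun ω => ‖L ω‖) 2 μ)
  (hL1 : ∫ ω, ‖L ω‖ ^ 2 ∂μ ≤ 1) (hA : ∀ ω, IsMonotoneOp (A ω))
  (hJ : ∀ ω, IsResolventOf (A ω) (J ω))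
include hLm hL hL1 hA hJ

theorem integral_adjoint_mem_closure_range (hJm : ∀ ζ, Measurable fun ω => J ω (L ω ζ))
    (hJ2 : ∀ ζ, MemLp (fun ω => J ω (L ω ζ)) 2 μ) {q u : Ω → H} (hqm : Measurable q)
    (hq : MemLp q 2 μ) (hu : MemLp u 2 μ) (hqu : ∀ᵐ ω ∂μ, u ω ∈ A ω (q ω)) :
    ∫ ω, (L ω).adjoint (q ω) ∂μ
      ∈ closure (Set.range fun ζ => ∫ ω, (L ω).adjoint (J ω (L ω ζ)) ∂μ) := by
  set x := ∫ ω, (L ω).adjoint (q ω) ∂μ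
  have hw : MemLp (fun ω => q ω + u ω - L ω x) 2 μ :=
    (hq.add hu).sub (memLp_apply_of_memLp_norm hLm hL x)
  have hw2 := (memLp_two_iff_integrable_sq_norm hw.1).1 hw
  refine mem_closure_range_of_forall_le_inner
    (firmlyNonexpansive_integral_adjoint hLm hL hL1 (fun ω => (hJ ω).firmlyNonexpansive (hA ω))
      hJm hJ2) (C := ∫ ω, ‖q ω + u ω - L ω x‖ ^ 2 / 4 ∂μ) fun z => ?_
  have hdm : Measurable fun ω => J ω (L ω z) - q ω := (hJm z).sub hqm
  have hd : MemLp (fun ω => J ω (L ω z) - q ω) 2 μ := (hJ2 z).sub hq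
  rw [← integral_adjoint_sub hLm hL (hJm z) (hJ2 z) hqm hq, inner_integral_adjoint hLm hL hdm hd,
    ← integral_neg]
  refine integral_mono_ae (hw2.div_const 4).neg
    (hd.integrable_inner (memLp_apply_of_memLp_norm hLm hL _)) ?_
  filter_upwards [hqu] with ω hω
  have h := (hA ω).neg_norm_sq_div_four_le_inner ((hJ ω).sub_mem (L ω z)) hω (L ω x)
  rwa [add_sub_cancel, ← map_sub, neg_div] at h

theorem integral_adjoint_mem_closure_range_of_ae_nonempty
    (hJmeas : ∀ v : Ω → H, Measurable v → Measurable fun ω => J ω (v ω))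
    {x₀ s₀ : Ω → H} (hx₀ : MemLp x₀ 2 μ) (hs₀ : MemLp s₀ 2 μ)
    (h₀ : ∀ᵐ ω ∂μ, s₀ ω ∈ A ω (x₀ ω)) {p : Ω → H} (hpm : Measurable p) (hp : MemLp p 2 μ)
    (hpA : ∀ᵐ ω ∂μ, (A ω (p ω)).Nonempty) :
    ∫ ω, (L ω).adjoint (p ω) ∂μ
      ∈ closure (Set.range fun ζ => ∫ ω, (L ω).adjoint (J ω (L ω ζ)) ∂μ) := by
  have hJm (ζ : X) : Measurable fun ω => J ω (L ω ζ) := hJmeas _ (hLm ζ)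
  have hJ2 := memLp_resolvent_apply hA hJ hx₀ hs₀ h₀ hLm hL hJm
  set q : ℕ → Ω → H := fun n ω => scaledResolvent (J ω) (n + 1) (p ω)
  have hc (n : ℕ) : (1 : ℝ) ≤ n + 1 := le_add_of_nonneg_left n.cast_nonneg
  have hqA (n : ℕ) (ω : Ω) : ((n : ℝ) + 1) • (p ω - q n ω) ∈ A ω (q n ω) :=
    (hJ ω).smul_sub_scaledResolvent_mem (hA ω) (hc n) (p ω)
  have hqm (n : ℕ) : Measurable (q n) :=
    hJmeas _ (measurable_invAddSmul (fun ω => (hJ ω).firmlyNonexpansive (hA ω)) hJmeas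
      (by simp) (hpm.const_smul _))
  have hq (n : ℕ) : MemLp (q n) 2 μ := memLp_of_smul_sub_mem hA hx₀ hs₀ h₀ (hc n) hp (hqm n) (hqA n)
  have hmem (n : ℕ) := integral_adjoint_mem_closure_range hLm hL hL1 hA hJ hJm hJ2 (hqm n) (hq n)
    ((hp.sub (hq n)).const_smul ((n : ℝ) + 1)) (ae_of_all _ (hqA n))
  refine isClosed_closure.mem_of_tendsto (b := atTop) ?_ (Eventually.of_forall hmem)
  refine tendsto_integral_of_dominated_convergence
    (fun ω => ‖L ω‖ * (‖p ω‖ + (2 * ‖x₀ ω‖ + ‖s₀ ω‖)))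
    (fun n => (measurable_adjoint_apply hLm (hqm n)).aestronglyMeasurable)
    (hL.integrable_mul (hp.norm.add ((hx₀.norm.const_mul 2).add hs₀.norm))) (fun n => ?_) ?_
  · filter_upwards [h₀] with ω hω
    calc ‖(L ω).adjoint (q n ω)‖ ≤ ‖L ω‖ * ‖q n ω‖ := by
          simpa only [LinearIsometryEquiv.norm_map] using (L ω).adjoint.le_opNorm (q n ω)
      _ ≤ _ := by gcongr; exact (hA ω).norm_le_of_smul_sub_mem hω (hc n) (hqA n ω)
  · filter_upwards [hpA] with ω hω
    exact ((L ω).adjoint.continuous.tendsto _).comp ((hJ ω).tendsto_scaledResolvent (hA ω) hω)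

theorem closure_range_integral_adjoint_resolvent
    (hJmeas : ∀ v : Ω → H, Measurable v → Measurable fun ω => J ω (v ω))
    {x₀ s₀ : Ω → H} (hx₀ : MemLp x₀ 2 μ) (hs₀ : MemLp s₀ 2 μ)
    (h₀ : ∀ᵐ ω ∂μ, s₀ ω ∈ A ω (x₀ ω)) :
    closure (Set.range fun ζ => ∫ ω, (L ω).adjoint (J ω (L ω ζ)) ∂μ)
      = closure {ξ : X | ∃ xs : Ω → H, Measurable xs ∧
          (∫⁻ ω, (‖xs ω‖₊ : ℝ≥0∞) ^ 2 ∂μ) < ⊤ ∧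
          (∀ᵐ ω ∂μ, (A ω (xs ω)).Nonempty) ∧ ξ = ∫ ω, (L ω).adjoint (xs ω) ∂μ} := by
  have hJm (ζ : X) : Measurable fun ω => J ω (L ω ζ) := hJmeas _ (hLm ζ)
  refine (closure_mono ?_).antisymm (closure_minimal ?_ isClosed_closure)
  · rintro _ ⟨ζ, rfl⟩
    exact ⟨_, hJm ζ, (memLp_two_iff_lintegral_nnnorm_sq_lt_top (hJm ζ).aestronglyMeasurable).1
      (memLp_resolvent_apply hA hJ hx₀ hs₀ h₀ hLm hL hJm ζ),
      ae_of_all _ fun ω => ⟨_, (hJ ω).sub_mem _⟩, rfl⟩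
  · rintro _ ⟨p, hpm, hp, hpA, rfl⟩
    exact integral_adjoint_mem_closure_range_of_ae_nonempty hLm hL hL1 hA hJ hJmeas hx₀ hs₀ h₀ hpm
      ((memLp_two_iff_lintegral_nnnorm_sq_lt_top hpm.aestronglyMeasurable).2 hp) hpA

end Monotone

end IntegralResolventMixture

theorem stmt_8_general
    {Ω : Type*} [MeasurableSpace Ω] {μ : Measure Ω}
    {X : Type*} [NormedAddCommGroup X] [InnerProductSpace ℝ X] [CompleteSpace X]
    [SecondCountableTopology X] [MeasurableSpace X] [BorelSpace X]
    {H : Type*} [NormedAddCommGroup H] [InnerProductSpace ℝ H] [CompleteSpace H]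
    [SecondCountableTopology H] [MeasurableSpace H] [BorelSpace H]
    -- the family of maximally monotone operators, with its resolvents `JA ω = J_{A_ω}`
    -- and the resolvents `JAinv ω = J_{A_ω⁻¹}` of the inverses
    (A : Ω → H → Set H) (JA JAinv : Ω → H → H)
    (hAmax : ∀ ω, IsMaxMonotone (A ω))
    (hJA : ∀ ω, IsResolventOf (A ω) (JA ω))
    (hJAinv : ∀ ω, IsResolventOf (graphInv (A ω)) (JAinv ω))
    (hJAmeas : ∀ x : Ω → H, Measurable x → Measurable fun ω => JA ω (x ω))
    (hdom : ∃ x xs : Ω → H, Measurable x ∧ Measurable xs ∧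
      (∫⁻ ω, (‖x ω‖₊ : ℝ≥0∞) ^ 2 ∂μ) < ⊤ ∧ (∫⁻ ω, (‖xs ω‖₊ : ℝ≥0∞) ^ 2 ∂μ) < ⊤ ∧
      ∀ᵐ ω ∂μ, xs ω ∈ A ω (x ω))
    -- the family of bounded linear operators
    (L : Ω → X →L[ℝ] H)
    (hLmeas : ∀ ξ : X, Measurable fun ω => L ω ξ)
    (hLint : Integrable (fun ω => ‖L ω‖ ^ 2) μ)
    (hL1 : (∫ ω, ‖L ω‖ ^ 2 ∂μ) ≤ 1)
    :
    closure {ξ : X |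
        ((rmiOp fun ζ : X => ∫ ω, (L ω).adjoint (JA ω (L ω ζ)) ∂μ) ξ).Nonempty}
      = closure {ξ : X | ∃ xs : Ω → H, Measurable xs ∧
          (∫⁻ ω, (‖xs ω‖₊ : ℝ≥0∞) ^ 2 ∂μ) < ⊤ ∧
          (∀ᵐ ω ∂μ, (A ω (xs ω)).Nonempty) ∧ ξ = ∫ ω, (L ω).adjoint (xs ω) ∂μ} ∧
    closure {η : X | ∃ ξ : X,
        η ∈ graphInv (rmiOp fun ζ : X => ∫ ω, (L ω).adjoint (JAinv ω (L ω ζ)) ∂μ) ξ}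
      = closure {ξ : X | ∃ xs : Ω → H, Measurable xs ∧
          (∫⁻ ω, (‖xs ω‖₊ : ℝ≥0∞) ^ 2 ∂μ) < ⊤ ∧
          (∀ᵐ ω ∂μ, ∃ y : H, xs ω ∈ A ω y) ∧ ξ = ∫ ω, (L ω).adjoint (xs ω) ∂μ} := by
  obtain ⟨x₀, s₀, hx₀m, hs₀m, hx₀, hs₀, h₀⟩ := hdom
  rw [← memLp_two_iff_lintegral_nnnorm_sq_lt_top hx₀m.aestronglyMeasurable] at hx₀
  rw [← memLp_two_iff_lintegral_nnnorm_sq_lt_top hs₀m.aestronglyMeasurable] at hs₀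
  have hA (ω : Ω) : IsMonotoneOp (A ω) := (hAmax ω).1
  have hL := memLp_two_of_integrable_sq (fun ω => norm_nonneg (L ω)) hLint
  have hJAinvmeas (v : Ω → H) (hv : Measurable v) : Measurable fun ω => JAinv ω (v ω) := by
    simp only [(hJA _).apply_eq_sub (hJAinv _)]
    exact hv.sub (hJAmeas v hv)
  refine ⟨?_, ?_⟩
  · rw [setOf_rmiOp_nonempty]
    exact closure_range_integral_adjoint_resolvent hLmeas hL hL1 hA hJA hJAmeas hx₀ hs₀ h₀
  · rw [setOf_exists_mem_graphInv_rmiOp]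
    exact closure_range_integral_adjoint_resolvent hLmeas hL hL1 (fun ω => (hA ω).graphInv)
      hJAinv hJAinvmeas hs₀ hx₀ h₀

/-- Theorem 3.5(ix)-(x): with `W = rmi(L_ω, A_ω)` and `C = rcm(L_ω, A_ω)`,
the closure of `dom W` equals the closure of
`{∫ L_ω* x*(ω) dμ : x*` measurable, `∫‖x*‖² dμ < ∞`, `x*(ω) ∈ dom A_ω` μ-a.e.`}`, and the
closure of `ran C` equals the closure of the same set with `ran A_ω` in place of `dom A_ω`. -/
theorem stmt_8
    {Ω : Type*} [MeasurableSpace Ω] {μ : Measure Ω} [SigmaFinite μ] [μ.IsComplete]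
    {X : Type*} [NormedAddCommGroup X] [InnerProductSpace ℝ X] [CompleteSpace X]
    [SecondCountableTopology X] [MeasurableSpace X] [BorelSpace X]
    {H : Type*} [NormedAddCommGroup H] [InnerProductSpace ℝ H] [CompleteSpace H]
    [SecondCountableTopology H] [MeasurableSpace H] [BorelSpace H]
    -- the family of maximally monotone operators, with its resolvents `JA ω = J_{A_ω}`
    -- and the resolvents `JAinv ω = J_{A_ω⁻¹}` of the inverses
    (A : Ω → H → Set H) (JA JAinv : Ω → H → H)
    (hAmax : ∀ ω, IsMaxMonotone (A ω))
    (hJA : ∀ ω, IsResolventOf (A ω) (JA ω))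
    (hJAinv : ∀ ω, IsResolventOf (graphInv (A ω)) (JAinv ω))
    (hJAmeas : ∀ x : Ω → H, Measurable x → Measurable fun ω => JA ω (x ω))
    (hdom : ∃ x xs : Ω → H, Measurable x ∧ Measurable xs ∧
      (∫⁻ ω, (‖x ω‖₊ : ℝ≥0∞) ^ 2 ∂μ) < ⊤ ∧ (∫⁻ ω, (‖xs ω‖₊ : ℝ≥0∞) ^ 2 ∂μ) < ⊤ ∧
      ∀ᵐ ω ∂μ, xs ω ∈ A ω (x ω))
    -- the family of bounded linear operators
    (L : Ω → X →L[ℝ] H)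
    (hLmeas : ∀ ξ : X, Measurable fun ω => L ω ξ)
    (hLint : Integrable (fun ω => ‖L ω‖ ^ 2) μ)
    (hL0 : 0 < ∫ ω, ‖L ω‖ ^ 2 ∂μ) (hL1 : (∫ ω, ‖L ω‖ ^ 2 ∂μ) ≤ 1)
    :
    closure {ξ : X |
        ((rmiOp fun ζ : X => ∫ ω, (L ω).adjoint (JA ω (L ω ζ)) ∂μ) ξ).Nonempty}
      = closure {ξ : X | ∃ xs : Ω → H, Measurable xs ∧
          (∫⁻ ω, (‖xs ω‖₊ : ℝ≥0∞) ^ 2 ∂μ) < ⊤ ∧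
          (∀ᵐ ω ∂μ, (A ω (xs ω)).Nonempty) ∧ ξ = ∫ ω, (L ω).adjoint (xs ω) ∂μ} ∧
    closure {η : X | ∃ ξ : X,
        η ∈ graphInv (rmiOp fun ζ : X => ∫ ω, (L ω).adjoint (JAinv ω (L ω ζ)) ∂μ) ξ}
      = closure {ξ : X | ∃ xs : Ω → H, Measurable xs ∧
          (∫⁻ ω, (‖xs ω‖₊ : ℝ≥0∞) ^ 2 ∂μ) < ⊤ ∧
          (∀ᵐ ω ∂μ, ∃ y : H, xs ω ∈ A ω y) ∧ ξ = ∫ ω, (L ω).adjoint (xs ω) ∂μ} :=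
  stmt_8_general A JA JAinv hAmax hJA hJAinv hJAmeas hdom L hLmeas hLint hL1
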